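/- Mesh width estimates for the generalized Shishkin mesh: there exists a constant C, independent of N and of σ, such that for every integer N ≥ 4 divisible by 4, every σ ∈ (0,1/4], and every j with N/4 ≤ j ≤ N/2 − 1: h_{j+1} ≤ C/N and 0 ≤ h_{j+1} − h_j ≤ C/N². (In fact one may take h_{j+1} ≤ 7/N and h_{j+1} − h_j ≤ 48/N².) -/
import Mathlib


/-- Generating function of the generalized Shishkin mesh with transition
parameter `σ` (and `p = 32 - 128σ`, so that `K(1/2) = 1/2`). -/
noncomputable def genK (σ t : ℝ) : ℝ :=
  if t ≤ 1/4 then 4*σ*t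
  else (32 - 128*σ)*(t - 1/4)^3 + 4*σ*(t - 1/4) + σ

/-- Mesh points `x_j = K(j/N)` (for `j ≤ N/2`). -/
noncomputable def meshX (σ : ℝ) (N j : ℕ) : ℝ := genK σ ((j:ℝ)/(N:ℝ))

/-- Mesh widths `h_j = x_j − x_{j−1}`. -/
noncomputable def meshH (σ : ℝ) (N j : ℕ) : ℝ := meshX σ N j - meshX σ N (j-1)

lemma genK_eval_hi (σ s : ℝ) (hs : 0 ≤ s) :
    genK σ (1/4 + s) = (32 - 128*σ)*s^3 + 4*σ*s + σ := by
  rcases hs.lt_or_eq with h | h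
  · rw [genK, if_neg (by linarith)]; ring_nf
  · rw [genK, if_pos (by linarith), ← h]; ring

lemma genK_eval_lo (σ t : ℝ) (ht : t ≤ 1/4) : genK σ t = 4*σ*t := by
  rw [genK, if_pos ht]

lemma caseA_bounds (σ u : ℝ) (hσ0 : 0 < σ) (hσ1 : σ ≤ 1/4) (hu : 0 < u)
    (hu4 : u ≤ 1/4) :
    (32 - 128*σ)*u^3 + 4*σ*u ≤ 48*u ∧
    0 ≤ (32 - 128*σ)*u^3 ∧
    (32 - 128*σ)*u^3 ≤ 48*u^2 := by
  have hp0 : 0 ≤ 32 - 128*σ := by linarith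
  have hp32 : 32 - 128*σ ≤ 32 := by linarith
  have hu2 : u^2 ≤ 1/16 := by nlinarith
  have hpu : (32 - 128*σ)*u ≤ 8 := by nlinarith
  refine ⟨?_, ?_, ?_⟩
  · have h1 : (32 - 128*σ)*u^3 ≤ 8*u^2 := by nlinarith [sq_nonneg u]
    nlinarith [hu.le, sq_nonneg u]
  · exact mul_nonneg hp0 (by positivity)
  · nlinarith [sq_nonneg u]

lemma coarse_bounds (σ u b : ℝ) (hσ0 : 0 < σ) (hσ1 : σ ≤ 1/4) (hu : 0 < u)
    (hub : u ≤ b) (hbd : b + u ≤ 1/4) :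
    (32 - 128*σ)*((b+u)^3 - b^3) + 4*σ*u ≤ 48*u ∧
    0 ≤ (32 - 128*σ)*((b+u)^3 - 2*b^3 + (b-u)^3) ∧
    (32 - 128*σ)*((b+u)^3 - 2*b^3 + (b-u)^3) ≤ 48*u^2 := by
  have hb0 : 0 ≤ b := by linarith
  have ha0 : 0 ≤ b + u := by linarith
  have ha4 : b + u ≤ 1/4 := hbd
  have hb4 : b ≤ 1/4 := by linarith
  have hp0 : 0 ≤ 32 - 128*σ := by linarith
  have hp32 : 32 - 128*σ ≤ 32 := by linarith
  have hid1 : (b+u)^3 - b^3 = u*((b+u)^2 + (b+u)*b + b^2) := by ring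
  have hid2 : (b+u)^3 - 2*b^3 + (b-u)^3 = 6*b*u^2 := by ring
  have hq0 : 0 ≤ (b+u)^2 + (b+u)*b + b^2 := by positivity
  have hA2 : (b+u)^2 ≤ 1/16 := by nlinarith
  have hB2 : b^2 ≤ 1/16 := by nlinarith
  have hAB : (b+u)*b ≤ 1/16 := by nlinarith
  have bound1 : (b+u)^2 + (b+u)*b + b^2 ≤ 3/16 := by linarith
  have hX0 : 0 ≤ u*((b+u)^2 + (b+u)*b + b^2) := mul_nonneg hu.le hq0
  have hX1 : u*((b+u)^2 + (b+u)*b + b^2) ≤ u*(3/16) :=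
    mul_le_mul_of_nonneg_left bound1 hu.le
  have h1 : (32 - 128*σ)*((b+u)^3 - b^3) ≤ 6*u := by
    rw [hid1]
    have h2 : (32 - 128*σ)*(u*((b+u)^2 + (b+u)*b + b^2)) ≤ (32 - 128*σ)*(u*(3/16)) :=
      mul_le_mul_of_nonneg_left hX1 hp0
    have h3 : (32 - 128*σ)*(u*(3/16)) ≤ 32*(u*(3/16)) :=
      mul_le_mul_of_nonneg_right hp32 (by positivity)
    linarith
  have h4s : 4*σ*u ≤ u := by
    have h := mul_nonneg (by linarith : (0:ℝ) ≤ 1/4 - σ) hu.le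
    nlinarith [h]
  refine ⟨by linarith, ?_, ?_⟩
  · rw [hid2]
    exact mul_nonneg hp0 (mul_nonneg (by linarith) (sq_nonneg u))
  · rw [hid2]
    have hpb : (32 - 128*σ)*b ≤ 8 := by nlinarith
    have h5 : (32 - 128*σ)*b*u^2 ≤ 8*u^2 := mul_le_mul_of_nonneg_right hpb (sq_nonneg u)
    nlinarith [h5]

/-- Mesh width estimates for the generalized Shishkin mesh in the coarse
region: `h_{j+1} ≤ C/N` and `0 ≤ h_{j+1} − h_j ≤ C/N²`, with `C` independent
of `N` and `σ`. -/
theorem stmt_10 :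
    ∃ C : ℝ, ∀ N : ℕ, 4 ∣ N → 4 ≤ N → ∀ σ ∈ Set.Ioc (0:ℝ) (1/4),
      ∀ j : ℕ, N/4 ≤ j → j ≤ N/2 - 1 →
        meshH σ N (j+1) ≤ C / N ∧
        0 ≤ meshH σ N (j+1) - meshH σ N j ∧
        meshH σ N (j+1) - meshH σ N j ≤ C / (N:ℝ)^2 := by
  refine ⟨48, ?_⟩
  rintro N ⟨m, rfl⟩ hN4 σ ⟨hσ0, hσ1⟩ j hj1 hj2
  have hm1 : 1 ≤ m := by omega
  have hmj : m ≤ j := by omega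
  have hjm : j + 1 ≤ 2*m := by omega
  obtain ⟨k, rfl⟩ : ∃ k, j = m + k := ⟨j - m, by omega⟩
  have hkm : k + 1 ≤ m := by omega
  have hmR : (1:ℝ) ≤ (m:ℝ) := by exact_mod_cast hm1
  have hmne : (m:ℝ) ≠ 0 := by linarith
  obtain ⟨u, hudef⟩ : ∃ u : ℝ, u = 1/(4*(m:ℝ)) := ⟨_, rfl⟩
  have hu : 0 < u := by rw [hudef]; positivity
  have hmu : (m:ℝ)*u = 1/4 := by rw [hudef]; field_simp; try ring
  have hb : ((k:ℝ)+1)*u ≤ 1/4 := by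
    have hkR : ((k:ℝ)+1) ≤ (m:ℝ) := by exact_mod_cast hkm
    nlinarith
  have hX : ∀ i : ℕ, m ≤ i →
      meshX σ (4*m) i = (32 - 128*σ)*(((i:ℝ)-(m:ℝ))*u)^3 + 4*σ*(((i:ℝ)-(m:ℝ))*u) + σ := by
    intro i hi
    have hiR : (m:ℝ) ≤ (i:ℝ) := by exact_mod_cast hi
    have hcast : ((i:ℕ):ℝ)/(((4*m:ℕ)):ℝ) = 1/4 + ((i:ℝ)-(m:ℝ))*u := by
      rw [hudef]; push_cast; field_simp; try ring
    rw [meshX, hcast, genK_eval_hi σ _ (mul_nonneg (by linarith) hu.le)]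
  have h48N : (48:ℝ)/(((4*m:ℕ)):ℝ) = 48*u := by rw [hudef]; push_cast; ring
  have h48N2 : (48:ℝ)/(((4*m:ℕ)):ℝ)^2 = 48*u^2 := by
    rw [hudef]; push_cast; field_simp; try ring
  rcases k with _ | k
  · -- j = m : boundary case
    simp only [Nat.add_zero]
    have hu4 : u ≤ 1/4 := by push_cast at hb; linarith
    obtain ⟨kA1, kA2, kA3⟩ := caseA_bounds σ u hσ0 hσ1 hu hu4
    have e1 := hX (m+1) (by omega)
    have e0 := hX m le_rfl
    have elo : meshX σ (4*m) (m-1) = 4*σ*(1/4 - u) := by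
      rw [meshX]
      have hcast : (((m-1:ℕ)):ℝ)/(((4*m:ℕ)):ℝ) = 1/4 - u := by
        rw [hudef]; push_cast [hm1]; field_simp; try ring
      rw [hcast, genK_eval_lo σ _ (by linarith)]
    rw [meshH, meshH, Nat.add_sub_cancel, e1, e0, elo, h48N, h48N2]
    push_cast
    refine ⟨by linarith [kA1], by linarith [kA2], by linarith [kA3]⟩
  · -- j = m + (k+1) : interior case
    have hub : u ≤ ((k:ℝ)+1)*u := by nlinarith [hu.le, Nat.cast_nonneg (α := ℝ) k]
    have hbd2 : ((k:ℝ)+1)*u + u ≤ 1/4 := by push_cast at hb; linarith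
    obtain ⟨kB1, kB2, kB3⟩ := coarse_bounds σ u (((k:ℝ)+1)*u) hσ0 hσ1 hu hub hbd2
    have e2 := hX (m+(k+1)+1) (by omega)
    have e1 := hX (m+(k+1)) (by omega)
    have e0 := hX (m+k) (by omega)
    have idx1 : m+(k+1)+1-1 = m+(k+1) := by omega
    have idx2 : m+(k+1)-1 = m+k := by omega
    rw [meshH, meshH, idx1, idx2, e2, e1, e0, h48N, h48N2]
    push_cast
    refine ⟨by linarith [kB1], by linarith [kB2], by linarith [kB3]⟩
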